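/- The only directed tree (up to isomorphism of directed trees) admitting a formally normal weighted shift with all weights nonzero is ℤ with edges {(n, n+1) : n ∈ ℤ}. -/

import Mathlib

open scoped ENNReal ComplexConjugate Classical

/-- A directed tree: a connected directed graph with no (directed) circuits in which
every vertex has at most one parent and at most one vertex has no parent (the root). -/
structure DirectedTree (V : Type*) where
  E : V → V → Prop
  parent_unique : ∀ ⦃u₁ u₂ v : V⦄, E u₁ v → E u₂ v → u₁ = u₂
  no_circuit : ∀ v : V, ¬ Relation.TransGen E v v
  connected : ∀ u v : V, Relation.ReflTransGen (fun a b => E a b ∨ E b a) u v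
  root_unique : ∀ ⦃r₁ r₂ : V⦄, (∀ u, ¬ E u r₁) → (∀ u, ¬ E u r₂) → r₁ = r₂

namespace DirectedTree

variable {V : Type*} (T : DirectedTree V)

/-- `v ∈ V°`, i.e. `v` is not a root. -/
def HasParent (v : V) : Prop := ∃ u, T.E u v

/-- The parent partial map (junk value `v` itself at a root). -/
noncomputable def par (v : V) : V := if h : T.HasParent v then h.choose else v

theorem par_spec {v : V} (h : T.HasParent v) : T.E (T.par v) v := by
  rw [par, dif_pos h]; exact h.choose_spec

/-- the child set of a vertex -/
def chi (u : V) : Set V := {v | T.E u v}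

/-- the child set of a set of vertices -/
def chiSet (W : Set V) : Set V := {v | ∃ u ∈ W, T.E u v}

/-- the iterated child set `Chi^n(u)` -/
def chiN (n : ℕ) (u : V) : Set V := (T.chiSet)^[n] {u}

/-- the set of descendants of a vertex -/
def des (u : V) : Set V := ⋃ n : ℕ, T.chiN n u

/-- the iterated parent partial map, as an `Option`-valued map -/
noncomputable def parN : ℕ → V → Option V
  | 0, v => some v
  | n + 1, v => if T.HasParent v then parN n (T.par v) else none

end DirectedTree

/-- the Hilbert space `ℓ²(V)` -/
abbrev l2 (V : Type*) : Type _ := lp (fun _ : V => ℂ) 2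

/-- the canonical orthonormal basis vector `e_u` of `ℓ²(V)` -/
noncomputable def evec {V : Type*} (u : V) : l2 V := lp.single 2 u 1

variable {V : Type*}

/-- the formal action `Λ_T` of a weighted shift with weights `lam` -/
noncomputable def lamMap (T : DirectedTree V) (lam : V → ℂ) (f : V → ℂ) : V → ℂ :=
  fun v => if T.HasParent v then lam v * f (T.par v) else 0

theorem lamMap_add (T : DirectedTree V) (lam : V → ℂ) (f g : V → ℂ) :
    lamMap T lam (f + g) = lamMap T lam f + lamMap T lam g := by
  funext v
  simp only [lamMap, Pi.add_apply]
  split_ifs <;> ring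

theorem lamMap_smul (T : DirectedTree V) (lam : V → ℂ) (c : ℂ) (f : V → ℂ) :
    lamMap T lam (c • f) = c • lamMap T lam f := by
  funext v
  simp only [lamMap, Pi.smul_apply, smul_eq_mul]
  split_ifs <;> ring

/-- the (maximal) domain of the weighted shift `S_lam` -/
noncomputable def shiftDomain (T : DirectedTree V) (lam : V → ℂ) : Submodule ℂ (l2 V) where
  carrier := {f : l2 V | Memℓp (lamMap T lam ⇑f) 2}
  zero_mem' := by
    have : lamMap T lam ⇑(0 : l2 V) = 0 := by
      funext v; simp [lamMap]
    simp only [Set.mem_setOf_eq, this]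
    exact zero_memℓp
  add_mem' := by
    intro f g hf hg
    have h : lamMap T lam ⇑(f + g) = lamMap T lam ⇑f + lamMap T lam ⇑g := by
      rw [lp.coeFn_add]; exact lamMap_add T lam _ _
    simp only [Set.mem_setOf_eq, h]
    exact hf.add hg
  smul_mem' := by
    intro c f hf
    have h : lamMap T lam ⇑(c • f) = c • lamMap T lam ⇑f := by
      rw [lp.coeFn_smul]; exact lamMap_smul T lam _ _
    simp only [Set.mem_setOf_eq, h]
    exact hf.const_smul c

/-- the weighted shift `S_lam` on the directed tree `T`, as an unbounded operator in `ℓ²(V)` -/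
noncomputable def shift (T : DirectedTree V) (lam : V → ℂ) : l2 V →ₗ.[ℂ] l2 V where
  domain := shiftDomain T lam
  toFun :=
    { toFun := fun f => ⟨lamMap T lam ⇑(f : l2 V), f.2⟩
      map_add' := by
        intro f g
        apply Subtype.ext
        exact lamMap_add T lam _ _
      map_smul' := by
        intro c f
        apply Subtype.ext
        exact lamMap_smul T lam _ _ }
/-- A densely defined operator `A` is formally normal if `dom A ⊆ dom A*` and
`‖A* h‖ = ‖A h‖` for all `h ∈ dom A`. -/
def FormallyNormal {H : Type*} [NormedAddCommGroup H] [InnerProductSpace ℂ H]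
    [CompleteSpace H] (A : H →ₗ.[ℂ] H) : Prop :=
  Dense (A.domain : Set H) ∧ A.domain ≤ A.adjoint.domain ∧
    ∀ (f : H) (hf : f ∈ A.domain) (hf' : f ∈ A.adjoint.domain),
      ‖A.adjoint ⟨f, hf'⟩‖ = ‖A ⟨f, hf⟩‖

/-- A densely defined operator `A` is normal if `dom A = dom A*` and
`‖A* h‖ = ‖A h‖` for all `h ∈ dom A` (such an operator is automatically closed). -/
def IsNormalOp {H : Type*} [NormedAddCommGroup H] [InnerProductSpace ℂ H]
    [CompleteSpace H] (A : H →ₗ.[ℂ] H) : Prop :=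
  Dense (A.domain : Set H) ∧ A.domain = A.adjoint.domain ∧
    ∀ (f : H) (hf : f ∈ A.domain) (hf' : f ∈ A.adjoint.domain),
      ‖A.adjoint ⟨f, hf'⟩‖ = ‖A ⟨f, hf⟩‖

/-! Density of `dom S` forces every `e_u` into `dom S` (otherwise `dom S ⊆ {g | g u = 0}`), and
`S* e_u = conj λ_u e_{par u}`, or `0` at a root. Testing `‖S* f‖ = ‖S f‖` on `f = e_u`: at a root
`u` it gives `S e_u = 0`, so `u` has no children, the tree is a point and `S = 0`; hence every
vertex has a parent, and `‖S e_u‖ = |λ_u| ≠ 0` gives it a child. Two children `v₁ ≠ v₂` of `u`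
are impossible: `F = λ_{v₁} e_{v₁} + λ_{v₂} e_{v₂}` has `S e_{v₁} ⊥ S e_{v₂}`, so
`‖S F‖² = |λ_{v₁}|⁴ + |λ_{v₂}|⁴`, while `S* F = (|λ_{v₁}|² + |λ_{v₂}|²) e_u`. So the child map is a
permutation inverse to `par`, without periodic points (no circuits) and with a single orbit
(connectedness): the tree is `ℤ`. Conversely, on `ℤ` the shift with unit weights is the unitary
`f ↦ f ∘ par`. -/

namespace Equiv.Perm

variable {α : Type*} {σ : Perm α}

lemma eq_zero_of_zpow_apply_eq_self (hσ : ∀ (x : α) (k : ℕ), (σ ^ (k + 1)) x ≠ x) {x : α} {n : ℤ}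
    (hn : (σ ^ n) x = x) : n = 0 := by
  obtain ⟨k, rfl | rfl⟩ := Int.eq_nat_or_neg n <;> rcases k with _ | k
  · rfl
  · exact absurd hn (by exact_mod_cast hσ x k)
  · rfl
  · rw [zpow_neg, zpow_natCast, inv_eq_iff_eq] at hn
    exact absurd hn.symm (hσ x k)

lemma exists_equiv_int [Nonempty α] (hσ : ∀ (x : α) (k : ℕ), (σ ^ (k + 1)) x ≠ x)
    (hconn : ∀ x y, σ.SameCycle x y) : ∃ φ : α ≃ ℤ, ∀ a, φ (σ a) = φ a + 1 := by
  obtain ⟨x₀⟩ := ‹Nonempty α›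
  have hbij : Function.Bijective fun n : ℤ => (σ ^ n) x₀ := by
    refine ⟨fun m n h => ?_, fun y => hconn x₀ y⟩
    have : (σ ^ (n - m)) ((σ ^ m) x₀) = (σ ^ m) x₀ := by
      rw [← mul_apply, ← zpow_add, sub_add_cancel]; exact h.symm
    linarith [eq_zero_of_zpow_apply_eq_self hσ this]
  refine ⟨(Equiv.ofBijective _ hbij).symm, fun a => ?_⟩
  rw [Equiv.symm_apply_eq, Equiv.ofBijective_apply, add_comm, zpow_add, zpow_one, mul_apply]
  exact congrArg σ ((Equiv.ofBijective _ hbij).apply_symm_apply a).symm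

end Equiv.Perm

lemma LinearPMap.map_smul_add_smul {R E F : Type*} [Ring R] [AddCommGroup E] [Module R E]
    [AddCommGroup F] [Module R F] (A : E →ₗ.[R] F) {x y : E} (hx : x ∈ A.domain)
    (hy : y ∈ A.domain) (a b : R) :
    A ⟨a • x + b • y, add_mem (A.domain.smul_mem a hx) (A.domain.smul_mem b hy)⟩ =
      a • A ⟨x, hx⟩ + b • A ⟨y, hy⟩ := by
  rw [← A.map_smul, ← A.map_smul, ← A.map_add]
  rfl

lemma formallyNormal_of_eq_unitary {H : Type*} [NormedAddCommGroup H] [InnerProductSpace ℂ H]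
    [CompleteSpace H] (A : H →ₗ.[ℂ] H) (U : H ≃ₗᵢ[ℂ] H) (hdom : ∀ x, x ∈ A.domain)
    (hA : ∀ x : A.domain, A x = U x) : FormallyNormal A := by
  have hd : Dense (A.domain : Set H) := by simp [Set.eq_univ_of_forall hdom]
  have hadj (y : H) (x : A.domain) : inner ℂ (U.symm y) (x : H) = inner ℂ y (A x) := by
    rw [hA, ← U.inner_map_map, U.apply_symm_apply]
  refine ⟨hd, fun y _ => LinearPMap.mem_adjoint_domain_of_exists _ ⟨_, hadj y⟩,
    fun f _ hf' => ?_⟩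
  rw [LinearPMap.adjoint_apply_eq hd _ (hadj f), hA, U.symm.norm_map, U.norm_map]

lemma memℓp_two_iff_summable_sq {E : Type*} [NormedAddCommGroup E] {f : V → E} :
    Memℓp f 2 ↔ Summable fun v => ‖f v‖ ^ 2 := by
  rw [memℓp_gen_iff (by norm_num)]
  norm_num

lemma memℓp_two_comp_equiv {W : Type*} (e : V ≃ W) (f : l2 W) : Memℓp (f ∘ e) 2 :=
  memℓp_two_iff_summable_sq.2 <|
    e.summable_iff.2 (memℓp_two_iff_summable_sq.1 (lp.memℓp f))

lemma l2.norm_sq_eq_tsum (f : l2 V) : ‖f‖ ^ 2 = ∑' v, ‖f v‖ ^ 2 := by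
  simpa using lp.norm_rpow_eq_tsum (p := 2) (by norm_num) f

noncomputable def l2.compEquiv {W : Type*} (e : V ≃ W) : l2 W ≃ₗᵢ[ℂ] l2 V where
  toFun f := ⟨f ∘ e, memℓp_two_comp_equiv e f⟩
  invFun g := ⟨g ∘ e.symm, memℓp_two_comp_equiv e.symm g⟩
  map_add' _ _ := rfl
  map_smul' _ _ := rfl
  left_inv f := lp.ext (funext fun w => congrArg f (e.apply_symm_apply w))
  right_inv g := lp.ext (funext fun v => congrArg g (e.symm_apply_apply v))
  norm_map' f := by
    rw [← sq_eq_sq₀ (norm_nonneg _) (norm_nonneg _), l2.norm_sq_eq_tsum, l2.norm_sq_eq_tsum]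
    exact e.tsum_eq (fun w => ‖f w‖ ^ 2)

lemma evec_apply (u v : V) : evec u v = if v = u then 1 else 0 := by
  simp [evec, Pi.single_apply]

lemma inner_evec_left (u : V) (g : l2 V) : inner ℂ (evec u) g = g u := by
  simp [evec, lp.inner_single_left]

lemma norm_evec (u : V) : ‖evec u‖ = 1 := by
  simp [evec, lp.norm_single]

namespace DirectedTree

variable (T : DirectedTree V)

lemma par_eq_of_E {u v : V} (h : T.E u v) : T.par v = u :=
  T.parent_unique (T.par_spec ⟨u, h⟩) h

lemma eq_of_isolated {u : V} (hpar : ¬ T.HasParent u) (hchi : ∀ v, ¬ T.E u v) (v : V) :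
    v = u := by
  rcases Relation.ReflTransGen.cases_head (T.connected u v) with rfl | ⟨w, huw | hwu, -⟩
  · rfl
  · exact absurd huw (hchi w)
  · exact absurd ⟨w, hwu⟩ hpar

lemma disjoint_chi {v₁ v₂ : V} (h : v₁ ≠ v₂) : Disjoint (T.chi v₁) (T.chi v₂) :=
  Set.disjoint_left.2 fun _ h₁ h₂ => h (T.parent_unique h₁ h₂)

section childPerm

variable (hpar : ∀ v, T.HasParent v) (hchi : ∀ u, ∃! v, T.E u v)

noncomputable def childPerm : Equiv.Perm V where
  toFun u := (hchi u).exists.choose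
  invFun := T.par
  left_inv u := T.par_eq_of_E (hchi u).exists.choose_spec
  right_inv v := (hchi _).unique (hchi _).exists.choose_spec (T.par_spec (hpar v))

lemma E_iff_childPerm_eq {a b : V} : T.E a b ↔ T.childPerm hpar hchi a = b :=
  ⟨(hchi a).unique (hchi a).exists.choose_spec, fun h => h ▸ (hchi a).exists.choose_spec⟩

lemma transGen_childPerm_pow (x : V) (k : ℕ) :
    Relation.TransGen T.E x ((T.childPerm hpar hchi ^ (k + 1)) x) := by
  induction k with
  | zero => exact .single ((T.E_iff_childPerm_eq hpar hchi).2 rfl)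
  | succ k ih =>
    rw [pow_succ', Equiv.Perm.mul_apply]
    exact ih.tail ((T.E_iff_childPerm_eq hpar hchi).2 rfl)

lemma sameCycle_childPerm (x y : V) : (T.childPerm hpar hchi).SameCycle x y := by
  induction T.connected x y with
  | refl => rfl
  | tail _ hstep ih =>
    rcases hstep with h | h <;> rw [T.E_iff_childPerm_eq hpar hchi] at h <;> subst h
    · exact ih.apply_right
    · exact Equiv.Perm.sameCycle_apply_right.1 ih

end childPerm

lemma exists_equiv_int_of_forall_existsUnique_E [Nonempty V] (hpar : ∀ v, T.HasParent v)
    (hchi : ∀ u, ∃! v, T.E u v) : ∃ φ : V ≃ ℤ, ∀ a b : V, T.E a b ↔ φ b = φ a + 1 := by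
  obtain ⟨φ, hφ⟩ := Equiv.Perm.exists_equiv_int (σ := T.childPerm hpar hchi)
    (fun x k h => T.no_circuit x (by simpa only [h] using T.transGen_childPerm_pow hpar hchi x k))
    (T.sameCycle_childPerm hpar hchi)
  refine ⟨φ, fun a b => ?_⟩
  rw [T.E_iff_childPerm_eq hpar hchi, ← hφ, φ.apply_eq_iff_eq, eq_comm]

end DirectedTree

section shift

variable (T : DirectedTree V) (lam : V → ℂ)

lemma lamMap_apply_of_E (f : V → ℂ) {u v : V} (h : T.E u v) : lamMap T lam f v = lam v * f u := by
  rw [lamMap, if_pos ⟨u, h⟩, T.par_eq_of_E h]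

lemma lamMap_evec (u : V) : lamMap T lam (evec u) = (T.chi u).indicator lam := by
  funext v
  by_cases h : T.E u v
  · rw [lamMap_apply_of_E T lam _ h, evec_apply, if_pos rfl, mul_one,
      Set.indicator_of_mem (show v ∈ T.chi u from h)]
  · rw [Set.indicator_of_notMem (show v ∉ T.chi u from h), lamMap]
    split_ifs with hv
    · rw [evec_apply, if_neg fun hp : T.par v = u => h (hp ▸ T.par_spec hv), mul_zero]
    · rfl

lemma coe_shift (f : (shift T lam).domain) : ⇑(shift T lam f) = lamMap T lam f := rfl

lemma apply_eq_zero_of_evec_notMem_shiftDomain {u : V} (hu : evec u ∉ (shift T lam).domain)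
    {g : l2 V} (hg : g ∈ (shift T lam).domain) : g u = 0 := by
  by_contra hgu
  refine hu ?_
  change Memℓp (lamMap T lam (evec u)) 2
  rw [lamMap_evec]
  refine (Memℓp.const_smul hg (g u)⁻¹).mono' fun v => ?_
  by_cases h : v ∈ T.chi u
  · rw [Set.indicator_of_mem h, Pi.smul_apply, lamMap_apply_of_E T lam _ h, smul_eq_mul,
      mul_comm (lam v), inv_mul_cancel_left₀ hgu]
  · rw [Set.indicator_of_notMem h, norm_zero]
    exact norm_nonneg _

lemma evec_mem_shiftDomain (hd : Dense ((shift T lam).domain : Set (l2 V))) (u : V) :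
    evec u ∈ (shift T lam).domain := by
  by_contra hu
  have hcl : closure ((shift T lam).domain : Set (l2 V)) ⊆ {g | g u = 0} :=
    closure_minimal (fun g hg => apply_eq_zero_of_evec_notMem_shiftDomain T lam hu hg)
      (isClosed_eq (lp.evalCLM ℂ (fun _ : V => ℂ) 2 u).continuous continuous_const)
  have := hcl (hd.closure_eq ▸ Set.mem_univ (evec u))
  simp [evec_apply] at this

lemma coe_shift_evec {u : V} (h : evec u ∈ (shift T lam).domain) :
    ⇑(shift T lam ⟨evec u, h⟩) = (T.chi u).indicator lam :=
  lamMap_evec T lam u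

lemma inner_evec_shift (u : V) (g : (shift T lam).domain) :
    inner ℂ (evec u) (shift T lam g) =
      inner ℂ (if T.HasParent u then conj (lam u) • evec (T.par u) else 0 : l2 V) (g : l2 V) := by
  rw [inner_evec_left, coe_shift, lamMap]
  split_ifs
  · rw [inner_smul_left, inner_evec_left, Complex.conj_conj]
  · rw [inner_zero_left]

lemma evec_mem_adjoint_domain (u : V) : evec u ∈ (shift T lam).adjoint.domain :=
  LinearPMap.mem_adjoint_domain_of_exists _ ⟨_, fun g => (inner_evec_shift T lam u g).symm⟩

lemma shift_adjoint_evec (hd : Dense ((shift T lam).domain : Set (l2 V))) (u : V)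
    (h : evec u ∈ (shift T lam).adjoint.domain) :
    (shift T lam).adjoint ⟨evec u, h⟩ =
      if T.HasParent u then conj (lam u) • evec (T.par u) else 0 :=
  LinearPMap.adjoint_apply_eq hd _ fun g => (inner_evec_shift T lam u g).symm

lemma inner_shift_evec_eq_zero {v₁ v₂ : V} (hne : v₁ ≠ v₂) (h₁ : evec v₁ ∈ (shift T lam).domain)
    (h₂ : evec v₂ ∈ (shift T lam).domain) :
    inner ℂ (shift T lam ⟨evec v₁, h₁⟩) (shift T lam ⟨evec v₂, h₂⟩) = 0 := by
  rw [lp.inner_eq_tsum, coe_shift_evec, coe_shift_evec]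
  refine (tsum_congr fun v => ?_).trans tsum_zero
  by_cases h : v ∈ T.chi v₁
  · rw [Set.indicator_of_notMem (Set.disjoint_left.1 (T.disjoint_chi hne) h), inner_zero_right]
  · rw [Set.indicator_of_notMem h, inner_zero_left]

end shift

section FormallyNormal

variable {T : DirectedTree V} {lam : V → ℂ}

lemma norm_shift_evec (hfn : FormallyNormal (shift T lam)) {u : V}
    (h : evec u ∈ (shift T lam).domain) :
    ‖shift T lam ⟨evec u, h⟩‖ = if T.HasParent u then ‖lam u‖ else 0 := by
  rw [← hfn.2.2 _ h (evec_mem_adjoint_domain T lam u), shift_adjoint_evec T lam hfn.1]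
  split_ifs <;> simp [norm_smul, norm_evec]

lemma shift_evec_eq_zero_iff (hlam : ∀ v, T.HasParent v → lam v ≠ 0) {u : V}
    (h : evec u ∈ (shift T lam).domain) : shift T lam ⟨evec u, h⟩ = 0 ↔ ∀ v, ¬ T.E u v := by
  refine ⟨fun h0 v hv => hlam v ⟨u, hv⟩ ?_, fun hchi => lp.ext ?_⟩
  · simpa [coe_shift_evec, Set.indicator_of_mem (show v ∈ T.chi u from hv)] using
      congrArg (⇑· v) h0
  · rw [coe_shift_evec, show T.chi u = ∅ from Set.eq_empty_of_forall_notMem hchi,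
      Set.indicator_empty', lp.coeFn_zero]

lemma hasParent_of_formallyNormal (hlam : ∀ v, T.HasParent v → lam v ≠ 0)
    (hne : ∃ f : (shift T lam).domain, shift T lam f ≠ 0) (hfn : FormallyNormal (shift T lam))
    (u : V) : T.HasParent u := by
  by_contra hu
  have hS := norm_shift_evec hfn (evec_mem_shiftDomain T lam hfn.1 u)
  rw [if_neg hu, norm_eq_zero, shift_evec_eq_zero_iff hlam] at hS
  obtain ⟨f, hf⟩ := hne
  refine hf (lp.ext (funext fun v => ?_))
  rw [coe_shift, lamMap, if_neg (T.eq_of_isolated hu hS v ▸ hu)]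
  rfl

lemma exists_E_of_formallyNormal (hlam : ∀ v, T.HasParent v → lam v ≠ 0)
    (hfn : FormallyNormal (shift T lam)) {u : V} (hu : T.HasParent u) : ∃ v, T.E u v := by
  have hS := norm_shift_evec hfn (evec_mem_shiftDomain T lam hfn.1 u)
  by_contra! hchi
  rw [(shift_evec_eq_zero_iff hlam _).2 hchi, if_pos hu, norm_zero, eq_comm, norm_eq_zero] at hS
  exact hlam u hu hS

lemma eq_of_E_of_formallyNormal (hlam : ∀ v, T.HasParent v → lam v ≠ 0)
    (hfn : FormallyNormal (shift T lam)) (hpar : ∀ v, T.HasParent v) {u v₁ v₂ : V}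
    (h₁ : T.E u v₁) (h₂ : T.E u v₂) : v₁ = v₂ := by
  by_contra hne
  set a := lam v₁
  set b := lam v₂
  have d₁ := evec_mem_shiftDomain T lam hfn.1 v₁
  have d₂ := evec_mem_shiftDomain T lam hfn.1 v₂
  have e₁ := evec_mem_adjoint_domain T lam v₁
  have e₂ := evec_mem_adjoint_domain T lam v₂
  have hF := add_mem (Submodule.smul_mem _ a d₁) (Submodule.smul_mem _ b d₂)
  have hF' := add_mem (Submodule.smul_mem _ a e₁) (Submodule.smul_mem _ b e₂)
  have hS : ‖shift T lam ⟨a • evec v₁ + b • evec v₂, hF⟩‖ ^ 2 = ‖a‖ ^ 4 + ‖b‖ ^ 4 := by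
    have horth : inner ℂ (a • shift T lam ⟨evec v₁, d₁⟩) (b • shift T lam ⟨evec v₂, d₂⟩) = 0 := by
      rw [inner_smul_left, inner_smul_right, inner_shift_evec_eq_zero T lam hne d₁ d₂, mul_zero,
        mul_zero]
    rw [LinearPMap.map_smul_add_smul _ d₁ d₂, sq,
      norm_add_sq_eq_norm_sq_add_norm_sq_of_inner_eq_zero _ _ horth, norm_smul, norm_smul,
      norm_shift_evec hfn, norm_shift_evec hfn, if_pos (hpar v₁),
      if_pos (hpar v₂)]
    ring
  have hS' : ‖(shift T lam).adjoint ⟨a • evec v₁ + b • evec v₂, hF'⟩‖ = ‖a‖ ^ 2 + ‖b‖ ^ 2 := by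
    rw [LinearPMap.map_smul_add_smul _ e₁ e₂, shift_adjoint_evec T lam hfn.1,
      shift_adjoint_evec T lam hfn.1, if_pos (hpar v₁), if_pos (hpar v₂), T.par_eq_of_E h₁,
      T.par_eq_of_E h₂, smul_smul, smul_smul, ← add_smul, norm_smul, norm_evec, mul_one,
      Complex.mul_conj, Complex.mul_conj, Complex.normSq_eq_norm_sq, Complex.normSq_eq_norm_sq]
    norm_cast
    exact Real.norm_of_nonneg (by positivity)
  have key := congrArg (· ^ 2) (hfn.2.2 _ hF hF')
  simp only [hS, hS'] at key
  have ha : 0 < ‖a‖ := norm_pos_iff.2 (hlam v₁ (hpar v₁))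
  have hb : 0 < ‖b‖ := norm_pos_iff.2 (hlam v₂ (hpar v₂))
  nlinarith [mul_pos (mul_pos ha ha) (mul_pos hb hb)]

end FormallyNormal

section UnitWeights

variable {T : DirectedTree V} {σ : V ≃ V}

lemma lamMap_one_of_E (hσ : ∀ v, T.E (σ v) v) (f : V → ℂ) : lamMap T 1 f = f ∘ σ :=
  funext fun v => by rw [lamMap_apply_of_E T 1 f (hσ v), Pi.one_apply, one_mul, Function.comp_apply]

lemma mem_shiftDomain_one_of_E (hσ : ∀ v, T.E (σ v) v) (f : l2 V) : f ∈ (shift T 1).domain := by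
  change Memℓp (lamMap T 1 f) 2
  rw [lamMap_one_of_E hσ]
  exact memℓp_two_comp_equiv σ f

lemma shift_one_eq_compEquiv (hσ : ∀ v, T.E (σ v) v) (f : (shift T 1).domain) :
    shift T 1 f = l2.compEquiv σ f :=
  lp.ext (lamMap_one_of_E hσ f)

lemma formallyNormal_shift_one_of_E (hσ : ∀ v, T.E (σ v) v) : FormallyNormal (shift T 1) :=
  formallyNormal_of_eq_unitary _ _ (mem_shiftDomain_one_of_E hσ) (shift_one_eq_compEquiv hσ)

lemma shift_one_evec_ne_zero (hσ : ∀ v, T.E (σ v) v) (u : V) :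
    shift T 1 ⟨evec u, mem_shiftDomain_one_of_E hσ _⟩ ≠ 0 := by
  rw [shift_one_eq_compEquiv hσ, ← norm_ne_zero_iff, LinearIsometryEquiv.norm_map, norm_evec]
  exact one_ne_zero

end UnitWeights

/-- a directed tree admits a nonzero formally normal weighted shift with
nonzero weights iff it is isomorphic to `ℤ` with edges `{(n, n+1)}`. -/
theorem admits_formallyNormal_iff_int {V : Type*} (T : DirectedTree V) :
    (∃ lam : V → ℂ, (∀ v : V, T.HasParent v → lam v ≠ 0) ∧
        (∃ f : (shift T lam).domain, shift T lam f ≠ 0) ∧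
        FormallyNormal (shift T lam)) ↔
      ∃ φ : V ≃ ℤ, ∀ a b : V, T.E a b ↔ φ b = φ a + 1 := by
  constructor
  · rintro ⟨lam, hlam, hne, hfn⟩
    have hpar := hasParent_of_formallyNormal hlam hne hfn
    have : Nonempty V := by
      obtain ⟨f, hf⟩ := hne
      by_contra! hV
      exact hf (lp.ext (funext hV.elim))
    refine T.exists_equiv_int_of_forall_existsUnique_E hpar fun u => ?_
    obtain ⟨v, hv⟩ := exists_E_of_formallyNormal hlam hfn (hpar u)
    exact ⟨v, hv, fun w hw => eq_of_E_of_formallyNormal hlam hfn hpar hw hv⟩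
  · rintro ⟨φ, hφ⟩
    have hσ (v : V) : T.E ((φ.trans ((Equiv.subRight 1).trans φ.symm)) v) v := by simp [hφ]
    exact ⟨1, fun _ _ => one_ne_zero, ⟨_, shift_one_evec_ne_zero hσ (φ.symm 0)⟩,
      formallyNormal_shift_one_of_E hσ⟩
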